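/- arXiv:2307.01696 — 4 statements merged into one kernel-verified Lean document; each statement's English description precedes it below -/
import Mathlib

section
/- Let A : Fin d → Matrix (Fin D) (Fin D) ℂ be an MPS tensor and v_N the unnormalized translation-invariant MPS on N sites generated by A. Then for every N ≥ 1, the squared Euclidean norm of v_N equals the trace of the N-th power of the transfer matrix: ∑_{i : Fin N → Fin d} |Tr(A^{i₁} ⋯ A^{i_N})|² = Tr(E_A^N). -/
open Matrix Kronecker

/-- The transfer matrix `E_A = ∑ i, conj (A i) ⊗ₖ A i` of an MPS tensor. -/
noncomputable def transferMatrix {d D : ℕ} (A : Fin d → Matrix (Fin D) (Fin D) ℂ) :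
    Matrix (Fin D × Fin D) (Fin D × Fin D) ℂ :=
  ∑ i, (A i).map (starRingEnd ℂ) ⊗ₖ A i

/-- The unnormalized translation-invariant MPS on `N` sites generated by a tensor `A`:
`v_N (i₁, …, i_N) = Tr (A^{i₁} ⋯ A^{i_N})`. -/
noncomputable def mpsVec {σ : Type*} {D : ℕ} (A : σ → Matrix (Fin D) (Fin D) ℂ) (N : ℕ) :
    (Fin N → σ) → ℂ :=
  fun x => ((List.ofFn fun k => A (x k)).prod).trace

/-! The trace of `E_A ^ N = ∑_x (conj A^{x₁} ⋯ conj A^{x_N}) ⊗ₖ (A^{x₁} ⋯ A^{x_N})` is, word by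
word, `Tr (conj M) * Tr M = |Tr M|²` with `M = A^{x₁} ⋯ A^{x_N}`, since the Kronecker product is
multiplicative and its trace is the product of the traces. -/

theorem sum_pow_eq_sum_listProd_ofFn {ι R : Type*} [Fintype ι] [Semiring R] (f : ι → R)
    (N : ℕ) : (∑ i, f i) ^ N = ∑ x : Fin N → ι, (List.ofFn fun k => f (x k)).prod := by
  induction N with
  | zero => simp
  | succ N ih =>
    rw [pow_succ', ih, Finset.sum_mul_sum, ← (Fin.consEquiv fun _ => ι).sum_comp,
      Fintype.sum_prod_type]
    simp [List.ofFn_succ, Fin.consEquiv]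

namespace Matrix

variable {m n α : Type*} {N : ℕ}

theorem listProd_ofFn_kronecker [CommSemiring α] [Fintype m] [Fintype n] [DecidableEq m]
    [DecidableEq n] (B : Fin N → Matrix m m α) (C : Fin N → Matrix n n α) :
    (List.ofFn fun k => B k ⊗ₖ C k).prod = (List.ofFn B).prod ⊗ₖ (List.ofFn C).prod := by
  induction N with
  | zero => simp
  | succ N ih => simp only [List.ofFn_succ, List.prod_cons, ih, mul_kronecker_mul]

theorem listProd_ofFn_map {β : Type*} [Semiring α] [Semiring β] [Fintype m] [DecidableEq m]
    (f : α →+* β) (B : Fin N → Matrix m m α) :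
    (List.ofFn fun k => (B k).map f).prod = (List.ofFn B).prod.map f := by
  simpa [List.map_ofFn, Function.comp_def] using (map_list_prod f.mapMatrix (List.ofFn B)).symm

end Matrix

theorem mps_normSq_eq_trace_transferMatrix_pow_general {d D : ℕ}
    (A : Fin d → Matrix (Fin D) (Fin D) ℂ) (N : ℕ) :
    ∑ x : Fin N → Fin d, (starRingEnd ℂ) (mpsVec A N x) * mpsVec A N x
      = (transferMatrix A ^ N).trace := by
  rw [transferMatrix, sum_pow_eq_sum_listProd_ofFn, trace_sum]
  refine Finset.sum_congr rfl fun x _ => ?_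
  rw [listProd_ofFn_kronecker, trace_kronecker, listProd_ofFn_map, mpsVec,
    AddMonoidHom.map_trace]

/-- the squared Euclidean norm of the unnormalized translation-invariant MPS on
`N ≥ 1` sites equals the trace of the `N`-th power of the transfer matrix. -/
theorem mps_normSq_eq_trace_transferMatrix_pow {d D : ℕ}
    (A : Fin d → Matrix (Fin D) (Fin D) ℂ) (N : ℕ) (hN : 1 ≤ N) :
    ∑ x : Fin N → Fin d, (starRingEnd ℂ) (mpsVec A N x) * mpsVec A N x
      = (transferMatrix A ^ N).trace :=
  mps_normSq_eq_trace_transferMatrix_pow_general A N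
end

section
/- Let A : Fin d → Matrix (Fin D) (Fin D) ℂ be an MPS tensor, v_N the unnormalized translation-invariant MPS on N sites generated by A, and for each k ∈ Fin N let Q_k be a d×d complex matrix. Then the matrix element of the product of single-site operators equals a trace of generalized transfer matrices: ∑_{i, j : Fin N → Fin d} conj(v_N(i)) · (∏_{k=1}^{N} (Q_k)_{i_k j_k}) · v_N(j) = Tr(E_{Q_1} E_{Q_2} ⋯ E_{Q_N}). -/
/-!
Expanding each `E_{Q_k} = ∑ i j, Q_k i j • (conj A^i ⊗ A^j)` and multiplying out the ordered
product gives one term per pair of configurations `x, y`. By the mixed-product property the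
Kronecker factors of a term multiply separately into `conj (A^{x₁} ⋯ A^{x_N}) ⊗ (A^{y₁} ⋯ A^{y_N})`,
and the trace of a Kronecker product is the product of the traces, `conj (v_N x) * v_N y`.
-/

open Matrix Kronecker

/-- The generalized transfer matrix `E_Q = ∑ i j, Q i j • (conj (A i) ⊗ₖ A j)` of an MPS tensor
with respect to a single-site operator `Q`. -/
noncomputable def genTransferMatrix {d D : ℕ} (A : Fin d → Matrix (Fin D) (Fin D) ℂ)
    (Q : Matrix (Fin d) (Fin d) ℂ) : Matrix (Fin D × Fin D) (Fin D × Fin D) ℂ :=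
  ∑ i, ∑ j, Q i j • ((A i).map (starRingEnd ℂ) ⊗ₖ A j)

theorem list_prod_ofFn_sum {R σ : Type*} [Semiring R] [Fintype σ] :
    ∀ {N : ℕ} (M : Fin N → σ → R),
      (List.ofFn fun k => ∑ i, M k i).prod = ∑ x : Fin N → σ, (List.ofFn fun k => M k (x k)).prod
  | 0, _ => by simp
  | N + 1, M => by
    rw [List.ofFn_succ, List.prod_cons, list_prod_ofFn_sum, Finset.sum_mul_sum,
      ← (Fin.consEquiv fun _ => σ).sum_comp, Fintype.sum_prod_type]
    simp [Fin.consEquiv, List.ofFn_succ]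

theorem list_prod_ofFn_sum_sum {R σ τ : Type*} [Semiring R] [Fintype σ] [Fintype τ] {N : ℕ}
    (M : Fin N → σ → τ → R) :
    (List.ofFn fun k => ∑ i, ∑ j, M k i j).prod
      = ∑ x : Fin N → σ, ∑ y : Fin N → τ, (List.ofFn fun k => M k (x k) (y k)).prod := by
  simp_rw [← Fintype.sum_prod_type', list_prod_ofFn_sum]
  exact (Equiv.arrowProdEquivProdArrow (Fin N) (fun _ => σ) (fun _ => τ)).sum_comp
    fun p => (List.ofFn fun k => M k (p.1 k) (p.2 k)).prod

theorem list_prod_ofFn_smul {R M : Type*} [CommMonoid R] [Monoid M] [MulAction R M]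
    [IsScalarTower R M M] [SMulCommClass R M M] :
    ∀ {N : ℕ} (c : Fin N → R) (B : Fin N → M),
      (List.ofFn fun k => c k • B k).prod = (∏ k, c k) • (List.ofFn B).prod
  | 0, _, _ => by simp
  | N + 1, c, B => by
    simp only [List.ofFn_succ, List.prod_cons, list_prod_ofFn_smul, Fin.prod_univ_succ,
      smul_mul_smul_comm]

theorem list_prod_ofFn_kronecker {R m n : Type*} [CommSemiring R] [Fintype m] [DecidableEq m]
    [Fintype n] [DecidableEq n] :
    ∀ {N : ℕ} (f : Fin N → Matrix m m R) (g : Fin N → Matrix n n R),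
      (List.ofFn fun k => f k ⊗ₖ g k).prod = (List.ofFn f).prod ⊗ₖ (List.ofFn g).prod
  | 0, _, _ => by simp
  | N + 1, f, g => by
    simp only [List.ofFn_succ, List.prod_cons, list_prod_ofFn_kronecker, mul_kronecker_mul]

theorem conj_mpsVec {σ : Type*} {D N : ℕ} (A : σ → Matrix (Fin D) (Fin D) ℂ) (x : Fin N → σ) :
    starRingEnd ℂ (mpsVec A N x)
      = ((List.ofFn fun k => (A (x k)).map (starRingEnd ℂ)).prod).trace := by
  rw [mpsVec, AddMonoidHom.map_trace, ← RingHom.mapMatrix_apply, map_list_prod, List.map_ofFn]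
  rfl

theorem trace_list_prod_ofFn_smul_conj_kronecker {σ : Type*} {D N : ℕ}
    (A : σ → Matrix (Fin D) (Fin D) ℂ) (c : Fin N → ℂ) (x y : Fin N → σ) :
    ((List.ofFn fun k => c k • ((A (x k)).map (starRingEnd ℂ) ⊗ₖ A (y k))).prod).trace
      = starRingEnd ℂ (mpsVec A N x) * (∏ k, c k) * mpsVec A N y := by
  rw [list_prod_ofFn_smul, trace_smul, list_prod_ofFn_kronecker, trace_kronecker, conj_mpsVec,
    mpsVec, smul_eq_mul]
  ring

/-- the matrix element of a product of single-site operators `Q_k` in the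
unnormalized translation-invariant MPS equals the trace of the ordered product of the
generalized transfer matrices `E_{Q_k}`. -/
theorem mps_matrixElement_eq_trace_genTransfer {d D N : ℕ}
    (A : Fin d → Matrix (Fin D) (Fin D) ℂ) (Q : Fin N → Matrix (Fin d) (Fin d) ℂ) :
    ∑ x : Fin N → Fin d, ∑ y : Fin N → Fin d,
        (starRingEnd ℂ) (mpsVec A N x) * (∏ k, Q k (x k) (y k)) * mpsVec A N y
      = ((List.ofFn fun k => genTransferMatrix A (Q k)).prod).trace := by
  simp only [genTransferMatrix, list_prod_ofFn_sum_sum, trace_sum,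
    trace_list_prod_ofFn_smul_conj_kronecker]
end

section
/- Let E be an n×n complex matrix of the form E = v·wᴴ + R, where v, w ∈ ℂⁿ are column vectors with wᴴv = 1, R·v = 0, wᴴ·R = 0, and the spectral radius of R is strictly less than 1. Then for every n×n complex matrix X, the sequence N ↦ Tr(E^N · X) converges to wᴴ X v as N → ∞. -/
/-!
`P = v wᴴ` is an idempotent annihilated by `R` on both sides, so
`E ^ (N + 1) = P + R ^ (N + 1)`. By Gelfand's formula `‖R ^ N‖` decays geometrically once
the spectrum of `R` lies in the open unit disc, hence `E ^ N → P` and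
`Tr (E ^ N X) → Tr (P X) = wᴴ X v`.
-/

open Matrix Filter Topology NNReal ENNReal

section BanachAlgebra

variable {A : Type*} [NormedRing A] [NormedAlgebra ℂ A] [CompleteSpace A]

theorem eventually_norm_pow_le_pow_of_spectralRadius_lt (a : A) {r : ℝ≥0}
    (h : spectralRadius ℂ a < r) : ∀ᶠ N : ℕ in atTop, ‖a ^ N‖ ≤ r ^ N := by
  have hroot := spectrum.pow_nnnorm_pow_one_div_tendsto_nhds_spectralRadius a
  filter_upwards [hroot.eventually_lt_const h, eventually_ne_atTop 0] with N hN hN0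
  have hN' : ((‖a ^ N‖₊ : ℝ≥0∞) ^ (1 / (N : ℝ))) ^ (N : ℝ) < (r : ℝ≥0∞) ^ (N : ℝ) :=
    ENNReal.rpow_lt_rpow hN (by positivity)
  rw [← ENNReal.rpow_mul, one_div_mul_cancel (by exact_mod_cast hN0), ENNReal.rpow_one,
    ENNReal.rpow_natCast, ← ENNReal.coe_pow, ENNReal.coe_lt_coe] at hN'
  exact_mod_cast hN'.le

theorem tendsto_pow_atTop_nhds_zero_of_forall_norm_lt_one (a : A)
    (h : ∀ μ ∈ spectrum ℂ a, ‖μ‖ < 1) : Tendsto (a ^ ·) atTop (𝓝 0) := by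
  rcases subsingleton_or_nontrivial A with hA | hA
  · simpa only [Subsingleton.elim _ (0 : A)] using tendsto_const_nhds
  have hρ : spectralRadius ℂ a < (1 : ℝ≥0) :=
    spectrum.spectralRadius_lt_of_forall_lt a fun μ hμ => by exact_mod_cast h μ hμ
  obtain ⟨r, hρr, hr1⟩ := ENNReal.lt_iff_exists_nnreal_btwn.mp hρ
  rw [tendsto_zero_iff_norm_tendsto_zero]
  exact squeeze_zero' (.of_forall fun N => norm_nonneg _)
    (eventually_norm_pow_le_pow_of_spectralRadius_lt a hρr)
    (tendsto_pow_atTop_nhds_zero_of_lt_one r.coe_nonneg (by exact_mod_cast hr1))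

end BanachAlgebra

theorem IsIdempotentElem.add_pow_succ_of_mul_eq_zero {R : Type*} [Semiring R] {p r : R}
    (hp : IsIdempotentElem p) (hpr : p * r = 0) (hrp : r * p = 0) (N : ℕ) :
    (p + r) ^ (N + 1) = p + r ^ (N + 1) := by
  induction N with
  | zero => simp
  | succ N ih =>
    have hrp' : r ^ (N + 1) * p = 0 := by rw [pow_succ, mul_assoc, hrp, mul_zero]
    rw [pow_succ, ih, add_mul, mul_add, mul_add, hp.eq, hpr, hrp', ← pow_succ, add_zero,
      zero_add]

theorem IsIdempotentElem.tendsto_add_pow_atTop {R : Type*} [Semiring R] [TopologicalSpace R]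
    [ContinuousAdd R] {p r : R} (hp : IsIdempotentElem p) (hpr : p * r = 0) (hrp : r * p = 0)
    (hr : Tendsto (r ^ ·) atTop (𝓝 0)) : Tendsto ((p + r) ^ ·) atTop (𝓝 p) := by
  rw [← tendsto_add_atTop_iff_nat 1]
  simp only [hp.add_pow_succ_of_mul_eq_zero hpr hrp]
  simpa using tendsto_const_nhds.add ((tendsto_add_atTop_iff_nat 1).mpr hr)

namespace Matrix

variable {ι : Type*} [Fintype ι]

theorem tendsto_pow_atTop_nhds_zero_of_forall_norm_lt_one [DecidableEq ι] (A : Matrix ι ι ℂ)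
    (h : ∀ μ ∈ spectrum ℂ A, ‖μ‖ < 1) : Tendsto (A ^ ·) atTop (𝓝 0) :=
  -- the `ℓ∞` operator norm induces the product topology
  letI := Matrix.linftyOpNormedRing (n := ι) (α := ℂ)
  letI := Matrix.linftyOpNormedAlgebra (n := ι) (α := ℂ) (R := ℂ)
  _root_.tendsto_pow_atTop_nhds_zero_of_forall_norm_lt_one A h

variable {α : Type*} [CommSemiring α]

theorem isIdempotentElem_vecMulVec {v u : ι → α} (h : u ⬝ᵥ v = 1) :
    IsIdempotentElem (vecMulVec v u) := by
  rw [IsIdempotentElem, vecMulVec_mul_vecMulVec, h, one_smul]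

theorem trace_vecMulVec_mul (v u : ι → α) (X : Matrix ι ι α) :
    (vecMulVec v u * X).trace = ∑ i, ∑ j, u i * X i j * v j := by
  rw [vecMulVec_mul, trace_vecMulVec, dotProduct_comm, ← dotProduct_mulVec]
  simp [dotProduct, mulVec, Finset.mul_sum, mul_assoc]

end Matrix

/-- if `E = v wᴴ + R` with `wᴴ v = 1`, `R v = 0`, `wᴴ R = 0`, and the spectral
radius of `R` strictly less than 1, then for every matrix `X` the sequence
`N ↦ Tr(E^N X)` converges to `wᴴ X v`. -/
theorem trace_pow_mul_tendsto {n : ℕ} (E R : Matrix (Fin n) (Fin n) ℂ) (v w : Fin n → ℂ)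
    (hE : E = Matrix.vecMulVec v (fun β => (starRingEnd ℂ) (w β)) + R)
    (hwv : ∑ i, (starRingEnd ℂ) (w i) * v i = 1)
    (hRv : R.mulVec v = 0)
    (hwR : Matrix.vecMul (fun β => (starRingEnd ℂ) (w β)) R = 0)
    (hspec : ∀ μ ∈ spectrum ℂ R, ‖μ‖ < 1) :
    ∀ X : Matrix (Fin n) (Fin n) ℂ,
      Filter.Tendsto (fun N : ℕ => ((E ^ N) * X).trace) Filter.atTop
        (nhds (∑ i, ∑ j, (starRingEnd ℂ) (w i) * X i j * v j)) := by
  intro X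
  set u : Fin n → ℂ := fun β => (starRingEnd ℂ) (w β)
  have hPR : vecMulVec v u * R = 0 := by rw [vecMulVec_mul, hwR, vecMulVec_zero]
  have hRP : R * vecMulVec v u = 0 := by rw [mul_vecMulVec, hRv, zero_vecMulVec]
  have hEP : Tendsto (E ^ ·) atTop (𝓝 (vecMulVec v u)) :=
    hE ▸ (isIdempotentElem_vecMulVec hwv).tendsto_add_pow_atTop hPR hRP
      (R.tendsto_pow_atTop_nhds_zero_of_forall_norm_lt_one hspec)
  have hcont : Continuous fun M : Matrix (Fin n) (Fin n) ℂ => (M * X).trace := by fun_prop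
  rw [← trace_vecMulVec_mul]
  exact (hcont.tendsto _).comp hEP
end

section
/- Let U be a depth-T nearest-neighbor quantum circuit on N sites of local dimension d, let u₁, …, u_N ∈ ℂ^d be unit vectors, and set ψ = U(u₁ ⊗ ⋯ ⊗ u_N). Let O, O' be d×d complex matrices and let a, b ∈ {1, …, N} be sites with b − a > 2T. Then the two-point function of ψ factorizes: ⟨ψ, O_a O'_b ψ⟩ = ⟨ψ, O_a ψ⟩ · ⟨ψ, O'_b ψ⟩, where O_a denotes the operator acting as O on site a and as the identity on all other sites. -/
open Matrix

/-- An operator on `N` sites of local dimension `d` is supported on the set `S` of sites if it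
acts as some gate `g` on the sites in `S` and as the identity on all other sites. -/
def SupportedOn {N d : ℕ} (M : Matrix (Fin N → Fin d) (Fin N → Fin d) ℂ)
    (S : Finset (Fin N)) : Prop :=
  ∃ g : Matrix ({ k // k ∈ S } → Fin d) ({ k // k ∈ S } → Fin d) ℂ,
    ∀ x y : Fin N → Fin d,
      M x y = if ∀ k ∉ S, x k = y k then g (fun k => x k.1) (fun k => y k.1) else 0

/-- A set of sites consisting of a single site or of two adjacent sites. -/
def IsNearestNeighborSupport {N : ℕ} (S : Finset (Fin N)) : Prop :=
  S.card ≤ 2 ∧ ∀ a ∈ S, ∀ b ∈ S, (a : ℕ) ≤ (b : ℕ) → (b : ℕ) ≤ (a : ℕ) + 1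

/-- A layer of a nearest-neighbor circuit: a product of unitary gates acting on pairwise
disjoint sets of sites, each set being a single site or a pair of adjacent sites. -/
def IsLayer {N d : ℕ} (U : Matrix (Fin N → Fin d) (Fin N → Fin d) ℂ) : Prop :=
  ∃ (m : ℕ) (G : Fin m → Matrix (Fin N → Fin d) (Fin N → Fin d) ℂ)
    (S : Fin m → Finset (Fin N)),
      (∀ i, SupportedOn (G i) (S i)) ∧
      (∀ i, (G i)ᴴ * G i = 1 ∧ G i * (G i)ᴴ = 1) ∧
      (∀ i j, i ≠ j → Disjoint (S i) (S j)) ∧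
      (∀ i, IsNearestNeighborSupport (S i)) ∧
      U = (List.ofFn G).prod

/-- A depth-`T` nearest-neighbor quantum circuit on `N` sites of local dimension `d`:
a product of `T` layers. -/
def IsCircuit {N d : ℕ} (T : ℕ) (U : Matrix (Fin N → Fin d) (Fin N → Fin d) ℂ) : Prop :=
  ∃ L : Fin T → Matrix (Fin N → Fin d) (Fin N → Fin d) ℂ,
    (∀ t, IsLayer (L t)) ∧ U = (List.ofFn L).prod

/-- The single-site operator acting as the `d×d` matrix `O` on site `a` and as the identity
on all other sites. -/
def siteOp {N d : ℕ} (O : Matrix (Fin d) (Fin d) ℂ) (a : Fin N) :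
    Matrix (Fin N → Fin d) (Fin N → Fin d) ℂ :=
  fun x y => if ∀ k, k ≠ a → x k = y k then O (x a) (y a) else 0

/-- The expectation value `⟨ψ, M ψ⟩` of an operator `M` in the (not necessarily normalized)
state `ψ`. -/
noncomputable def expval {ι : Type*} [Fintype ι] (M : Matrix ι ι ℂ) (ψ : ι → ℂ) : ℂ :=
  ∑ x, (starRingEnd ℂ) (ψ x) * M.mulVec ψ x

/-!
Heisenberg picture. Conjugating an operator supported on an interval of sites by one layer of
disjoint nearest-neighbour unitary gates fixes it up to the gates that touch the interval, so the
support grows by at most one site on each side; after `T` layers `U† O_a U` and `U† O'_b U` are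
supported on the disjoint intervals `[a - T, a + T]` and `[b - T, b + T]`. As `U U† = 1`, the
two-point function is the expectation of their product in the product state, and in a product
state operators supported on complementary sets of sites are independent.
-/

section Locality

variable {ι α R : Type*}

/-- A gate-free form of `SupportedOn`: the kernel vanishes unless the two configurations agree
outside `S`, and it is invariant under relabelling the local states of the sites outside `S`. -/
structure IsLocalOn [Zero R] (M : Matrix (ι → α) (ι → α) R) (S : Finset ι) : Prop where
  apply_eq_zero {x y : ι → α} {k : ι} : k ∉ S → x k ≠ y k → M x y = 0
  apply_piCongrRight (π : ι → Equiv.Perm α) : (∀ k ∈ S, π k = 1) →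
    ∀ x y, M (Equiv.piCongrRight π x) (Equiv.piCongrRight π y) = M x y

theorem exists_perm_piCongrRight_eq (S : Finset ι) {x x' : ι → α}
    (h : ∀ k ∈ S, x k = x' k) :
    ∃ π : ι → Equiv.Perm α, (∀ k ∈ S, π k = 1) ∧ Equiv.piCongrRight π x = x' := by
  classical
  refine ⟨fun k => if k ∈ S then 1 else Equiv.swap (x k) (x' k), fun k hk => if_pos hk, ?_⟩
  funext k
  by_cases hk : k ∈ S <;> simp [hk, h]

namespace IsLocalOn

variable [CommSemiring R] {M M' : Matrix (ι → α) (ι → α) R} {S S' : Finset ι}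

theorem mono (hM : IsLocalOn M S) (hSS' : S ⊆ S') : IsLocalOn M S' where
  apply_eq_zero hk := hM.apply_eq_zero fun hkS => hk (hSS' hkS)
  apply_piCongrRight π hπ := hM.apply_piCongrRight π fun k hk => hπ k (hSS' hk)

theorem apply_eq_apply (hM : IsLocalOn M S) {x y x' y' : ι → α}
    (hx : ∀ k ∈ S, x k = x' k) (hy : ∀ k ∈ S, y k = y' k)
    (hxy : ∀ k ∉ S, x k = y k) (hxy' : ∀ k ∉ S, x' k = y' k) : M x y = M x' y' := by
  obtain ⟨π, hπ, rfl⟩ := exists_perm_piCongrRight_eq S hx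
  rw [← hM.apply_piCongrRight π hπ x y]
  congr 1
  funext k
  by_cases hk : k ∈ S
  · simp [hπ k hk, hy k hk]
  · rw [← hxy' k hk]
    simp only [Equiv.piCongrRight_apply, Pi.map_apply, hxy k hk]

theorem conjTranspose [StarRing R] (hM : IsLocalOn M S) : IsLocalOn Mᴴ S where
  apply_eq_zero hk hxy := by
    rw [conjTranspose_apply, hM.apply_eq_zero hk (Ne.symm hxy), star_zero]
  apply_piCongrRight π hπ x y := by
    rw [conjTranspose_apply, conjTranspose_apply, hM.apply_piCongrRight π hπ]

variable [Fintype ι] [DecidableEq ι] [Fintype α]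

theorem mul (hM : IsLocalOn M S) (hM' : IsLocalOn M' S) : IsLocalOn (M * M') S where
  apply_eq_zero {x y k} hk hxy := by
    refine Finset.sum_eq_zero fun w _ => ?_
    by_cases hw : x k = w k
    · exact mul_eq_zero_of_right _ (hM'.apply_eq_zero hk (hw ▸ hxy))
    · exact mul_eq_zero_of_left (hM.apply_eq_zero hk hw) _
  apply_piCongrRight π hπ x y := by
    simp only [mul_apply]
    rw [← (Equiv.piCongrRight π).sum_comp]
    simp only [hM.apply_piCongrRight π hπ, hM'.apply_piCongrRight π hπ]

theorem mul_apply_of_disjoint (hM : IsLocalOn M S) (hM' : IsLocalOn M' S')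
    (hSS' : Disjoint S S') (x y : ι → α) :
    (M * M') x y = M x (S.piecewise y x) * M' (S.piecewise y x) y := by
  refine Fintype.sum_eq_single _ fun w hw => ?_
  obtain ⟨k, hk⟩ := Function.ne_iff.mp hw
  by_cases hkS : k ∈ S
  · rw [Finset.piecewise_eq_of_mem _ _ _ hkS] at hk
    exact mul_eq_zero_of_right _ (hM'.apply_eq_zero (Finset.disjoint_left.mp hSS' hkS) hk)
  · rw [Finset.piecewise_eq_of_notMem _ _ _ hkS] at hk
    exact mul_eq_zero_of_left (hM.apply_eq_zero hkS (Ne.symm hk)) _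

theorem commute_of_disjoint (hM : IsLocalOn M S) (hM' : IsLocalOn M' S')
    (hSS' : Disjoint S S') : Commute M M' := by
  ext x y
  rw [hM.mul_apply_of_disjoint hM' hSS', hM'.mul_apply_of_disjoint hM hSS'.symm]
  by_cases hxy : ∀ k, k ∉ S → k ∉ S' → x k = y k
  · have hSk {k} (hk : k ∈ S) : k ∉ S' := Finset.disjoint_left.mp hSS' hk
    have hS'k {k} (hk : k ∈ S') : k ∉ S := Finset.disjoint_right.mp hSS' hk
    rw [mul_comm, hM.apply_eq_apply (x' := S'.piecewise y x) (y' := y),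
      hM'.apply_eq_apply (x' := x) (y' := S'.piecewise y x)] <;>
    intro k hk <;> by_cases hkS : k ∈ S <;> by_cases hkS' : k ∈ S' <;>
      simp_all [Finset.piecewise]
  · push Not at hxy
    obtain ⟨k, hkS, hkS', hk⟩ := hxy
    rw [hM'.apply_eq_zero (x := S.piecewise y x) hkS' (by simpa [hkS] using hk),
      hM.apply_eq_zero (x := S'.piecewise y x) hkS (by simpa [hkS'] using hk), mul_zero, mul_zero]

theorem conj [StarRing R] {G : Matrix (ι → α) (ι → α) R} {Q : Finset ι}
    (hG : IsLocalOn G S) (hM : IsLocalOn M Q) : IsLocalOn (Gᴴ * M * G) (Q ∪ S) :=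
  ((hG.conjTranspose.mono Finset.subset_union_right).mul (hM.mono Finset.subset_union_left)).mul
    (hG.mono Finset.subset_union_right)

theorem conj_eq_self [StarRing R] [DecidableEq α] {G : Matrix (ι → α) (ι → α) R} {Q : Finset ι}
    (hG : IsLocalOn G S) (hGu : Gᴴ * G = 1) (hM : IsLocalOn M Q) (hSQ : Disjoint S Q) :
    Gᴴ * M * G = M := by
  rw [Matrix.mul_assoc, ← (hG.commute_of_disjoint hM hSQ).eq, ← Matrix.mul_assoc, hGu,
    Matrix.one_mul]

theorem mulVec_mul (hM : IsLocalOn M S) {H : (ι → α) → R} (hH : DependsOn H ↑Sᶜ)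
    (v : (ι → α) → R) : M *ᵥ (H * v) = H * (M *ᵥ v) := by
  funext x
  simp only [mulVec, dotProduct, Pi.mul_apply, Finset.mul_sum]
  refine Finset.sum_congr rfl fun y _ => ?_
  by_cases hxy : ∀ k ∉ S, x k = y k
  · rw [hH fun k hk => (hxy k (by simpa using hk)).symm]
    ring
  · push Not at hxy
    obtain ⟨k, hk, hxyk⟩ := hxy
    simp [hM.apply_eq_zero hk hxyk]

theorem dependsOn_mulVec (hM : IsLocalOn M S) {v : (ι → α) → R} (hv : DependsOn v S) :
    DependsOn (M *ᵥ v) S := by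
  intro x x' h
  obtain ⟨π, hπ, rfl⟩ := exists_perm_piCongrRight_eq S h
  symm
  simp only [mulVec, dotProduct]
  rw [← (Equiv.piCongrRight π).sum_comp]
  refine Finset.sum_congr rfl fun y _ => ?_
  rw [hM.apply_piCongrRight π hπ, hv (y := y) fun k hk => by simp [hπ k hk]]

end IsLocalOn

end Locality

section ProductState

variable {ι α R : Type*}

theorem dependsOn_prod_apply [CommMonoid R] (u : ι → α → R) (S : Finset ι) :
    DependsOn (fun x : ι → α => ∏ k ∈ S, u k (x k)) S :=
  fun _ _ h => Finset.prod_congr rfl fun k hk => by rw [h k hk]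

variable [Fintype ι] [DecidableEq ι] [Fintype α]

theorem sum_mul_eq_of_dependsOn [CommSemiring R] {μ : ι → α → R} (hμ : ∀ k, ∑ a, μ k a = 1)
    (S : Finset ι) {f g : (ι → α) → R} (hf : DependsOn f S) (hg : DependsOn g ↑Sᶜ) :
    ∑ x, f x * g x = (∑ x, f x * ∏ k ∈ Sᶜ, μ k (x k)) * ∑ x, g x * ∏ k ∈ S, μ k (x k) := by
  -- Both sides are sums over pairs of configurations; they match after exchanging the
  -- `S`-coordinates of the pair, and the extra factor `∑ x, ∏ k, μ k (x k)` equals one.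
  let τ : (ι → α) × (ι → α) → (ι → α) × (ι → α) := fun p =>
    (S.piecewise p.2 p.1, S.piecewise p.1 p.2)
  have hτ : Function.Involutive τ := fun p => by
    ext k <;> by_cases hk : k ∈ S <;> simp [τ, hk]
  have hμ1 : ∑ x : ι → α, ∏ k, μ k (x k) = 1 := by
    rw [← Fintype.prod_sum]
    exact Finset.prod_eq_one fun k _ => hμ k
  have hswap (p : (ι → α) × (ι → α)) :
      f (τ p).1 * (∏ k ∈ Sᶜ, μ k ((τ p).1 k)) * (g (τ p).2 * ∏ k ∈ S, μ k ((τ p).2 k))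
        = (∏ k, μ k (p.1 k)) * (f p.2 * g p.2) := by
    obtain ⟨x, y⟩ := p
    have hfy : f (S.piecewise y x) = f y :=
      hf fun k hk => Finset.piecewise_eq_of_mem _ _ _ (Finset.mem_coe.mp hk)
    have hgy : g (S.piecewise x y) = g y :=
      hg fun k hk => Finset.piecewise_eq_of_notMem _ _ _ (by simpa using hk)
    have hSc : ∏ k ∈ Sᶜ, μ k (S.piecewise y x k) = ∏ k ∈ Sᶜ, μ k (x k) :=
      Finset.prod_congr rfl fun k hk => by
        rw [Finset.piecewise_eq_of_notMem _ _ _ (Finset.mem_compl.mp hk)]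
    have hS : ∏ k ∈ S, μ k (S.piecewise x y k) = ∏ k ∈ S, μ k (x k) :=
      Finset.prod_congr rfl fun k hk => by rw [Finset.piecewise_eq_of_mem _ _ _ hk]
    simp only [τ, hfy, hgy, hSc, hS, ← Finset.prod_mul_prod_compl S]
    ring
  calc ∑ x, f x * g x
      = ∑ p : (ι → α) × (ι → α), (∏ k, μ k (p.1 k)) * (f p.2 * g p.2) := by
        simp only [Fintype.sum_prod_type, ← Finset.mul_sum, ← Finset.sum_mul, hμ1, one_mul]
    _ = ∑ p : (ι → α) × (ι → α),
          f (τ p).1 * (∏ k ∈ Sᶜ, μ k ((τ p).1 k)) * (g (τ p).2 * ∏ k ∈ S, μ k ((τ p).2 k)) :=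
        Finset.sum_congr rfl fun p _ => (hswap p).symm
    _ = ∑ p : (ι → α) × (ι → α),
          f p.1 * (∏ k ∈ Sᶜ, μ k (p.1 k)) * (g p.2 * ∏ k ∈ S, μ k (p.2 k)) :=
        Equiv.sum_comp (hτ.toPerm τ) fun p =>
          f p.1 * (∏ k ∈ Sᶜ, μ k (p.1 k)) * (g p.2 * ∏ k ∈ S, μ k (p.2 k))
    _ = _ := by rw [Finset.sum_mul_sum, Fintype.sum_prod_type]

end ProductState

theorem expval_mulVec {ι : Type*} [Fintype ι] (M U : Matrix ι ι ℂ) (ψ : ι → ℂ) :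
    expval M (U *ᵥ ψ) = expval (Uᴴ * M * U) ψ := by
  change star (U *ᵥ ψ) ⬝ᵥ M *ᵥ U *ᵥ ψ = star ψ ⬝ᵥ (Uᴴ * M * U) *ᵥ ψ
  rw [← mulVec_mulVec, ← mulVec_mulVec, star_mulVec, dotProduct_mulVec (star ψ) Uᴴ]

section Expval

variable {ι α : Type*} [Fintype ι] [DecidableEq ι] [Fintype α]

theorem expval_mul_of_isLocalOn_compl {u : ι → α → ℂ}
    (hu : ∀ k, ∑ i, Complex.normSq (u k i) = 1) {A B : Matrix (ι → α) (ι → α) ℂ}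
    {S : Finset ι} (hA : IsLocalOn A S) (hB : IsLocalOn B Sᶜ) :
    expval (A * B) (fun x => ∏ k, u k (x k))
      = expval A (fun x => ∏ k, u k (x k)) * expval B (fun x => ∏ k, u k (x k)) := by
  set ψ : Finset ι → (ι → α) → ℂ := fun T x => ∏ k ∈ T, u k (x k)
  have hψ (T : Finset ι) : DependsOn (ψ T) T := dependsOn_prod_apply u T
  have hφ : (fun x => ∏ k, u k (x k)) = ψ S * ψ Sᶜ :=
    funext fun x => (Finset.prod_mul_prod_compl S _).symm
  have hAφ : A *ᵥ (ψ S * ψ Sᶜ) = ψ Sᶜ * (A *ᵥ ψ S) := by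
    rw [mul_comm, hA.mulVec_mul (hψ Sᶜ)]
  have hBφ : B *ᵥ (ψ S * ψ Sᶜ) = ψ S * (B *ᵥ ψ Sᶜ) :=
    hB.mulVec_mul (by rw [compl_compl]; exact hψ S) _
  have hABφ : (A * B) *ᵥ (ψ S * ψ Sᶜ) = (B *ᵥ ψ Sᶜ) * (A *ᵥ ψ S) := by
    rw [← mulVec_mulVec, hBφ, mul_comm, hA.mulVec_mul (hB.dependsOn_mulVec (hψ Sᶜ))]
  have hμ (k : ι) : ∑ i, (starRingEnd ℂ) (u k i) * u k i = 1 := by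
    simp_rw [← Complex.normSq_eq_conj_mul_self]
    exact_mod_cast hu k
  have hnormSq (T : Finset ι) (x : ι → α) :
      (starRingEnd ℂ) (ψ T x) * ψ T x = ∏ k ∈ T, (starRingEnd ℂ) (u k (x k)) * u k (x k) := by
    simp [ψ, Finset.prod_mul_distrib]
  rw [hφ]
  simp only [expval, hAφ, hBφ, hABφ]
  refine (Finset.sum_congr rfl fun x _ => ?_).trans <| (sum_mul_eq_of_dependsOn hμ S
    (f := fun x => (starRingEnd ℂ) (ψ S x) * (A *ᵥ ψ S) x)
    (g := fun x => (starRingEnd ℂ) (ψ Sᶜ x) * (B *ᵥ ψ Sᶜ) x)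
    (fun x y h => by simp only [hψ S h, hA.dependsOn_mulVec (hψ S) h])
    (fun x y h => by simp only [hψ Sᶜ h, hB.dependsOn_mulVec (hψ Sᶜ) h])).trans ?_
  · simp only [Pi.mul_apply, map_mul]
    ring
  congr 1 <;> refine Finset.sum_congr rfl fun x _ => ?_ <;>
    simp only [Pi.mul_apply, map_mul, ← hnormSq] <;> ring

end Expval

section LightCone

theorem conjTranspose_mul_mul_mul {n R : Type*} [Fintype n] [Semiring R] [StarRing R]
    (A P M : Matrix n n R) : (A * P)ᴴ * M * (A * P) = Pᴴ * (Aᴴ * M * A) * P := by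
  simp only [conjTranspose_mul, Matrix.mul_assoc]

variable {ι α R : Type*} [Fintype ι] [DecidableEq ι] [Fintype α] [DecidableEq α]
  [CommSemiring R] [StarRing R]

theorem isLocalOn_conj_prod_ofFn {m : ℕ} {G : Fin m → Matrix (ι → α) (ι → α) R}
    {S : Fin m → Finset ι} (hG : ∀ i, IsLocalOn (G i) (S i)) (hGu : ∀ i, (G i)ᴴ * G i = 1)
    (hS : Pairwise fun i j => Disjoint (S i) (S j)) {M : Matrix (ι → α) (ι → α) R}
    {Q B : Finset ι} (hM : IsLocalOn M Q) (hQB : Q ⊆ B)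
    (hB : ∀ i, ¬ Disjoint (S i) Q → S i ⊆ B) :
    IsLocalOn ((List.ofFn G).prodᴴ * M * (List.ofFn G).prod) B := by
  induction m generalizing M Q with
  | zero => simpa using hM.mono hQB
  | succ m ih =>
    have hS' : Pairwise fun i j : Fin m => Disjoint (S i.succ) (S j.succ) :=
      fun i j hij => hS (Fin.succ_injective _ |>.ne hij)
    rw [List.ofFn_succ, List.prod_cons, conjTranspose_mul_mul_mul]
    by_cases h0 : Disjoint (S 0) Q
    · rw [(hG 0).conj_eq_self (hGu 0) hM h0]
      exact ih (fun i => hG i.succ) (fun i => hGu i.succ) hS' hM hQB fun i => hB i.succ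
    · refine ih (fun i => hG i.succ) (fun i => hGu i.succ) hS' ((hG 0).conj hM)
        (Finset.union_subset hQB (hB 0 h0)) fun i hi => hB i.succ fun hd => hi ?_
      exact Finset.disjoint_union_right.mpr ⟨hd, hS (Fin.succ_ne_zero i)⟩

theorem isLocalOn_conj_list_prod {B : ℕ → Finset ι} {l : List (Matrix (ι → α) (ι → α) R)}
    (hl : ∀ L ∈ l, ∀ r (M : Matrix (ι → α) (ι → α) R),
      IsLocalOn M (B r) → IsLocalOn (Lᴴ * M * L) (B (r + 1)))
    {M : Matrix (ι → α) (ι → α) R} {r : ℕ} (hM : IsLocalOn M (B r)) :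
    IsLocalOn (l.prodᴴ * M * l.prod) (B (r + l.length)) := by
  induction l generalizing M r with
  | nil => simpa using hM
  | cons L l ih =>
    rw [List.prod_cons, conjTranspose_mul_mul_mul, List.length_cons, ← add_assoc,
      add_right_comm]
    exact ih (fun L' hL' => hl L' (List.mem_cons_of_mem _ hL')) (hl L List.mem_cons_self r M hM)

end LightCone

section Circuit

variable {N d : ℕ} {L M U : Matrix (Fin N → Fin d) (Fin N → Fin d) ℂ}

theorem SupportedOn.isLocalOn {S : Finset (Fin N)} (h : SupportedOn M S) : IsLocalOn M S := by
  obtain ⟨g, hg⟩ := h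
  refine ⟨fun hk hxy => ?_, fun π hπ x y => ?_⟩
  · rw [hg, if_neg fun h => hxy (h _ hk)]
  · have hπS (z : Fin N → Fin d) :
        (fun k : { k // k ∈ S } => π k.1 (z k.1)) = fun k => z k.1 :=
      funext fun k => by simp [hπ k.1 k.2]
    simp only [hg, Equiv.piCongrRight_apply, Pi.map_apply, EmbeddingLike.apply_eq_iff_eq, hπS]

theorem isLocalOn_siteOp (O : Matrix (Fin d) (Fin d) ℂ) (a : Fin N) :
    IsLocalOn (siteOp O a) {a} := by
  refine ⟨fun hk hxy => ?_, fun π hπ x y => ?_⟩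
  · exact if_neg fun h => hxy (h _ (by simpa using hk))
  · simp [siteOp, hπ a (Finset.mem_singleton_self a)]

def siteBall (a : Fin N) (r : ℕ) : Finset (Fin N) :=
  Finset.univ.filter fun k => (a : ℕ) ≤ k + r ∧ (k : ℕ) ≤ a + r

@[simp]
theorem mem_siteBall {a k : Fin N} {r : ℕ} :
    k ∈ siteBall a r ↔ (a : ℕ) ≤ k + r ∧ (k : ℕ) ≤ a + r := by
  simp [siteBall]

theorem IsNearestNeighborSupport.subset_siteBall_succ {S : Finset (Fin N)}
    (hS : IsNearestNeighborSupport S) {a : Fin N} {r : ℕ} (h : ¬ Disjoint S (siteBall a r)) :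
    S ⊆ siteBall a (r + 1) := by
  obtain ⟨j, hjS, hj⟩ := Finset.not_disjoint_iff.mp h
  intro k hk
  rw [mem_siteBall] at hj ⊢
  rcases le_total (j : ℕ) k with hjk | hkj
  · have := hS.2 j hjS k hk hjk
    omega
  · have := hS.2 k hk j hjS hkj
    omega

theorem IsLayer.isLocalOn_conj (hL : IsLayer L) {a : Fin N} {r : ℕ}
    (hM : IsLocalOn M (siteBall a r)) : IsLocalOn (Lᴴ * M * L) (siteBall a (r + 1)) := by
  obtain ⟨m, G, S, hG, hGu, hS, hnn, rfl⟩ := hL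
  exact isLocalOn_conj_prod_ofFn (fun i => (hG i).isLocalOn) (fun i => (hGu i).1)
    (fun i j => hS i j) hM (fun k => by simp only [mem_siteBall]; omega)
    fun i hi => (hnn i).subset_siteBall_succ hi

theorem IsCircuit.isLocalOn_conj {T : ℕ} (hU : IsCircuit T U) {a : Fin N} {r : ℕ}
    (hM : IsLocalOn M (siteBall a r)) : IsLocalOn (Uᴴ * M * U) (siteBall a (r + T)) := by
  obtain ⟨L, hL, rfl⟩ := hU
  simpa using isLocalOn_conj_list_prod (l := List.ofFn L)
    (fun L' hL' _ _ hM => by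
      obtain ⟨t, rfl⟩ := List.mem_ofFn.mp hL'
      exact (hL t).isLocalOn_conj hM) hM

theorem IsLayer.mem_unitary (hL : IsLayer L) : L ∈ unitary _ := by
  obtain ⟨m, G, S, -, hGu, -, -, rfl⟩ := hL
  exact Submonoid.list_prod_mem _ fun G' hG' => by
    obtain ⟨i, rfl⟩ := List.mem_ofFn.mp hG'
    simpa [Unitary.mem_iff, star_eq_conjTranspose] using hGu i

theorem IsCircuit.mem_unitary {T : ℕ} (hU : IsCircuit T U) : U ∈ unitary _ := by
  obtain ⟨L, hL, rfl⟩ := hU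
  exact Submonoid.list_prod_mem _ fun L' hL' => by
    obtain ⟨t, rfl⟩ := List.mem_ofFn.mp hL'
    exact (hL t).mem_unitary

end Circuit

/-- strict light cone of finite-depth circuits. For a state `ψ` obtained by
applying a depth-`T` nearest-neighbor circuit to a product of unit vectors, the two-point
function of single-site operators at sites `a` and `b` with `b - a > 2T` factorizes. -/
theorem twoPoint_factorizes_of_depth_circuit {N d T : ℕ}
    (U : Matrix (Fin N → Fin d) (Fin N → Fin d) ℂ) (hU : IsCircuit T U)
    (u : Fin N → Fin d → ℂ) (hu : ∀ k, ∑ i, Complex.normSq (u k i) = 1)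
    (O O' : Matrix (Fin d) (Fin d) ℂ) (a b : Fin N)
    (hab : (a : ℕ) + 2 * T < (b : ℕ)) :
    expval (siteOp O a * siteOp O' b) (U.mulVec fun x => ∏ k, u k (x k))
      = expval (siteOp O a) (U.mulVec fun x => ∏ k, u k (x k))
        * expval (siteOp O' b) (U.mulVec fun x => ∏ k, u k (x k)) := by
  have hsite (c : Fin N) : ({c} : Finset (Fin N)) ⊆ siteBall c 0 := by simp
  have hA := hU.isLocalOn_conj ((isLocalOn_siteOp O a).mono (hsite a))
  have hB := hU.isLocalOn_conj ((isLocalOn_siteOp O' b).mono (hsite b))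
  have hdisj : Disjoint (siteBall a (0 + T)) (siteBall b (0 + T)) :=
    Finset.disjoint_left.mpr fun k hka hkb => by simp only [mem_siteBall] at hka hkb; omega
  have hUU : U * Uᴴ = 1 := by
    simpa [star_eq_conjTranspose] using (Unitary.mem_iff.mp hU.mem_unitary).2
  have hsplit : Uᴴ * (siteOp O a * siteOp O' b) * U
      = (Uᴴ * siteOp O a * U) * (Uᴴ * siteOp O' b * U) := by
    simp only [Matrix.mul_assoc, ← Matrix.mul_assoc U Uᴴ, hUU, Matrix.one_mul]
  rw [expval_mulVec, expval_mulVec, expval_mulVec, hsplit,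
    expval_mul_of_isLocalOn_compl hu hA (hB.mono hdisj.le_compl_left)]
end
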